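/- Let n = 2mb with m, b ≥ 1 and let f_1,…,f_m, g_1,…,g_m : {0,1}^{2b} → {0,1} be arbitrary. Consider the qubits labeled 1,…,n arranged on a ring (qubit i adjacent to i+1 mod n). For every bipartition of the n qubits into two arcs, each contiguous with respect to this cyclic order, the Schmidt rank of the large-brick phase state |ψ_{f,g}⟩ across the bipartition is at most 2^{4b}; in particular, the entanglement entropy (von Neumann entropy of the reduced density matrix on either side) across any such cut is at most 4b. -/

import Mathlib

open scoped BigOperators ComplexOrder

namespace DT

noncomputable section

abbrev Bits (k : ℕ) := Fin k → Bool

/-- Square root of a positive semidefinite matrix, as `Matrix.PosSemidef.sqrt` was defined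
in the older Mathlib (removed since). -/
def posSemidefSqrt {ι : Type*} [Fintype ι] [DecidableEq ι] {A : Matrix ι ι ℂ}
    (hA : A.PosSemidef) : Matrix ι ι ℂ :=
  (hA.1.eigenvectorUnitary : Matrix ι ι ℂ) *
    Matrix.diagonal ((↑) ∘ Real.sqrt ∘ hA.1.eigenvalues) *
    (star hA.1.eigenvectorUnitary : Matrix ι ι ℂ)

/-- Trace norm of a complex square matrix: the sum of its singular values,
computed as the trace of `√(Xᴴ X)`. -/
def traceNorm {ι : Type*} [Fintype ι] [DecidableEq ι] (X : Matrix ι ι ℂ) : ℝ :=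
  ((posSemidefSqrt (Matrix.posSemidef_conjTranspose_mul_self X)).trace).re

/-- `t`-fold tensor (Kronecker) power of a square matrix. -/
def tpow {ι : Type*} (t : ℕ) (M : Matrix ι ι ℂ) : Matrix (Fin t → ι) (Fin t → ι) ℂ :=
  Matrix.of fun x y => ∏ i, M (x i) (y i)

/-- Outer product `|ψ⟩⟨ψ|`. -/
def outer {ι : Type*} (ψ : ι → ℂ) : Matrix ι ι ℂ :=
  Matrix.of fun x y => ψ x * (starRingEnd ℂ) (ψ y)

/-- Orthogonal projector onto the symmetric subspace of `(ℂ^ι)^{⊗ t}`. -/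
def symProj (ι : Type*) [DecidableEq ι] (t : ℕ) : Matrix (Fin t → ι) (Fin t → ι) ℂ :=
  (t.factorial : ℂ)⁻¹ • ∑ σ : Equiv.Perm (Fin t),
    Matrix.of fun x y => if x = y ∘ σ then (1 : ℂ) else 0

/-- `t`-th moment operator of a Haar random state on `ℂ^ι`. -/
def haarMoment (ι : Type*) [Fintype ι] [DecidableEq ι] (t : ℕ) :
    Matrix (Fin t → ι) (Fin t → ι) ℂ :=
  ((Fintype.card ι + t - 1).choose t : ℂ)⁻¹ • symProj ι t

/-- Orthogonal projector onto `Sym^t(S)`, the symmetric subspace of `t` copies of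
the span of the computational basis vectors indexed by `S`. -/
def symProjOn {ι : Type*} [DecidableEq ι] (S : Finset ι) (t : ℕ) :
    Matrix (Fin t → ι) (Fin t → ι) ℂ :=
  (t.factorial : ℂ)⁻¹ • ∑ σ : Equiv.Perm (Fin t),
    Matrix.of fun x y => if (∀ i, x i ∈ S) ∧ x = y ∘ σ then (1 : ℂ) else 0

/-- `(-1)^v` for a bit `v`. -/
def sgn (v : Bool) : ℂ := if v then -1 else 1

/-- Subset-phase state. -/
def subsetPhase {ι : Type*} [DecidableEq ι] (S : Finset ι) (f : ι → Bool) : ι → ℂ :=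
  fun x => if x ∈ S then sgn (f x) / (Real.sqrt S.card : ℂ) else 0

/-- Subset state. -/
def subsetState {ι : Type*} [DecidableEq ι] (S : Finset ι) : ι → ℂ :=
  subsetPhase S fun _ => false

/-- `S` is a Schmidt-patch (glued) subset: a disjoint union of `R` products of
pairwise disjoint `M`-element subsets. -/
def IsPatch {X Y : Type*} [DecidableEq X] [DecidableEq Y] (M R : ℕ) (S : Finset (X × Y)) : Prop :=
  ∃ (A : Fin R → Finset X) (B : Fin R → Finset Y),
    (∀ j, (A j).card = M) ∧ (∀ j, (B j).card = M) ∧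
      (∀ i j, i ≠ j → Disjoint (A i) (A j)) ∧
      (∀ i j, i ≠ j → Disjoint (B i) (B j)) ∧
      S = Finset.univ.biUnion fun j => A j ×ˢ B j

open Classical in
/-- The family `F_{M,R}` of Schmidt-patch subsets of `X × Y`. -/
def patchFamily (X Y : Type*) [Fintype X] [Fintype Y] [DecidableEq X] [DecidableEq Y]
    (M R : ℕ) : Finset (Finset (X × Y)) :=
  Finset.univ.filter fun S => IsPatch M R S

/-- The graph on the edges of `P` relating edges sharing a left or right endpoint;
its connected components are the bipartite components of `P`. -/
def compGraph {X Y : Type*} (P : Finset (X × Y)) : SimpleGraph {e : X × Y // e ∈ P} :=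
  SimpleGraph.fromRel fun e e' => (e : X × Y).1 = (e' : X × Y).1 ∨ (e : X × Y).2 = (e' : X × Y).2

/-- Number of bipartite components (connected components containing at least one edge). -/
def numComponents {X Y : Type*} (P : Finset (X × Y)) : ℕ :=
  Nat.card (compGraph P).ConnectedComponent

/-- Number of vertices incident to at least one edge of `P` (total unique half-strings). -/
def numVerts {X Y : Type*} [DecidableEq X] [DecidableEq Y] (P : Finset (X × Y)) : ℕ :=
  (P.image Prod.fst).card + (P.image Prod.snd).card

/-- A doubly-unique subset of `X × Y`: all first coordinates are pairwise distinct and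
all second coordinates are pairwise distinct. -/
def DoublyUnique {X Y : Type*} (T : Finset (X × Y)) : Prop :=
  (∀ e ∈ T, ∀ e' ∈ T, Prod.fst e = Prod.fst e' → e = e') ∧
    (∀ e ∈ T, ∀ e' ∈ T, Prod.snd e = Prod.snd e' → e = e')

/-- Cyclic predecessor on `Fin m`. -/
def cpred {m : ℕ} (i : Fin m) : Fin m := ⟨((i : ℕ) + (m - 1)) % m, Nat.mod_lt _ i.pos⟩

/-- Large-brick phase state on `n = 2·m·b` qubits.  The `2m` blocks of `b` bits are indexed by
`Fin m × Bool`, where `(i, false)` is block `x_{2i+1}` and `(i, true)` is block `x_{2i+2}`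
of the paper; `f i` acts on blocks `(x_{2i+1}, x_{2i+2})` and `g i` acts on the preceding
overlapping pair of blocks (cyclically). -/
def lbps (m b : ℕ) (f g : Fin m → (Bits b × Bits b) → Bool) :
    ((Fin m × Bool) → Bits b) → ℂ :=
  fun x =>
    ((∏ i : Fin m, sgn (f i (x (i, false), x (i, true)))) *
        ∏ i : Fin m, sgn (g i (x (cpred i, true), x (i, false)))) /
      (Real.sqrt (2 ^ (2 * m * b)) : ℂ)

/-- Combine retained bits `a` (on positions `P p`) and measured bits `β` into full blocks. -/
def combine {m b : ℕ} (P : Fin m × Bool → Finset (Fin b))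
    (a : ∀ p, {r : Fin b // r ∈ P p} → Bool)
    (β : ∀ p, {r : Fin b // r ∉ P p} → Bool) : (Fin m × Bool) → Bits b :=
  fun p r => if h : r ∈ P p then a p ⟨r, h⟩ else β p ⟨r, h⟩

/-- Normalized post-measurement state of a large-brick phase state on the retained positions,
for measurement outcome `β`: a brickwork phase state with restricted brick functions. -/
def postState (m b : ℕ) (f g : Fin m → (Bits b × Bits b) → Bool)
    (P : Fin m × Bool → Finset (Fin b))
    (β : ∀ p, {r : Fin b // r ∉ P p} → Bool) :
    (∀ p, {r : Fin b // r ∈ P p} → Bool) → ℂ :=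
  fun a =>
    ((∏ i : Fin m, sgn (f i (combine P a β (i, false), combine P a β (i, true)))) *
        ∏ i : Fin m, sgn (g i (combine P a β (cpred i, true), combine P a β (i, false)))) /
      (Real.sqrt (2 ^ (∑ p : Fin m × Bool, (P p).card)) : ℂ)

/-- Reduced density matrix on the first factor of a pure state on `X × Y`. -/
def reducedProd {X Y : Type*} [Fintype Y] (ψ : X × Y → ℂ) : Matrix X X ℂ :=
  Matrix.of fun x x' => ∑ y, ψ (x, y) * (starRingEnd ℂ) (ψ (x', y))

/-- Reduced density matrix of a multi-qubit pure state on the qubits in `A`. -/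
def reducedOn {Q : Type*} [Fintype Q] [DecidableEq Q] (A : Finset Q)
    (ψ : (Q → Bool) → ℂ) :
    Matrix ({q : Q // q ∈ A} → Bool) ({q : Q // q ∈ A} → Bool) ℂ :=
  Matrix.of fun a a' => ∑ c : {q : Q // q ∉ A} → Bool,
    ψ (fun q => if h : q ∈ A then a ⟨q, h⟩ else c ⟨q, h⟩) *
      (starRingEnd ℂ) (ψ fun q => if h : q ∈ A then a' ⟨q, h⟩ else c ⟨q, h⟩)

/-- Ring position of a qubit of a large-brick state: qubit `r` of block `(i, s)`. -/
def qpos (m b : ℕ) (q : (Fin m × Bool) × Fin b) : ℕ :=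
  (2 * (q.1.1 : ℕ) + if q.1.2 then 1 else 0) * b + (q.2 : ℕ)

/-- `A` is a contiguous arc of qubits with respect to the ring order on the `n = 2mb` qubits. -/
def IsArc (m b : ℕ) (A : Finset ((Fin m × Bool) × Fin b)) : Prop :=
  ∃ s len : ℕ, ∀ q, q ∈ A ↔ ∃ j < len, qpos m b q % (2 * m * b) = (s + j) % (2 * m * b)

/-- Schmidt-patch subset-phase state determined by patches `A_j × B_j` and phase function `f`. -/
def spState {X Y : Type*} [DecidableEq X] [DecidableEq Y] (R M : ℕ)
    (A : Fin R → Finset X) (B : Fin R → Finset Y)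
    (f : X × Y → Bool) : X × Y → ℂ :=
  fun e => if ∃ j, e.1 ∈ A j ∧ e.2 ∈ B j then sgn (f e) / ((M : ℂ) * (Real.sqrt R : ℂ)) else 0

section Aux
open Matrix
variable {Q : Type*} [Fintype Q] [DecidableEq Q]

def dtMerge (A : Finset Q) (a : {q : Q // q ∈ A} → Bool) (c : {q : Q // q ∉ A} → Bool) :
    Q → Bool := fun q => if h : q ∈ A then a ⟨q, h⟩ else c ⟨q, h⟩

def dtCmat (A : Finset Q) (ψ : (Q → Bool) → ℂ) :
    Matrix ({q : Q // q ∈ A} → Bool) ({q : Q // q ∉ A} → Bool) ℂ :=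
  Matrix.of fun a c => ψ (dtMerge A a c)

lemma dtReducedOn_eq (A : Finset Q) (ψ : (Q → Bool) → ℂ) :
    reducedOn A ψ = dtCmat A ψ * (dtCmat A ψ)ᴴ := by
  ext a a'
  simp only [reducedOn, dtCmat, Matrix.mul_apply, dtMerge, Matrix.conjTranspose_apply,
    Matrix.of_apply]
  rfl

lemma dtReducedOn_posSemidef (A : Finset Q) (ψ : (Q → Bool) → ℂ) :
    (reducedOn A ψ).PosSemidef := by
  rw [dtReducedOn_eq]; exact Matrix.posSemidef_self_mul_conjTranspose _

open Classical in
lemma dtRank_reducedOn_le {N : Type*} [Fintype N] (A D : Finset Q)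
    (S : N → Finset Q) (F : N → (Q → Bool) → ℂ) (c : ℂ) (ψ : (Q → Bool) → ℂ)
    (hdep : ∀ β x y, (∀ q ∈ S β, x q = y q) → F β x = F β y)
    (hcov : ∀ β, S β ⊆ A ∪ D ∨ S β ⊆ Aᶜ ∪ D)
    (hψ : ∀ x, ψ x = c * ∏ β, F β x) :
    (reducedOn A ψ).rank ≤ 2 ^ D.card := by
  classical
  let K := ({q : Q // q ∈ D} → Bool)
  let extA : ({q : Q // q ∈ A} → Bool) → K → Q → Bool := fun a k q =>
    if h : q ∈ A then a ⟨q, h⟩ else if h : q ∈ D then k ⟨q, h⟩ else false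
  let extC : ({q : Q // q ∉ A} → Bool) → K → Q → Bool := fun cc k q =>
    if h : q ∈ D then k ⟨q, h⟩ else if h : q ∈ A then false else cc ⟨q, h⟩
  let U : Matrix ({q : Q // q ∈ A} → Bool) K ℂ := Matrix.of fun a k =>
    if ∀ (q : Q) (hq : q ∈ A) (hd : q ∈ D), a ⟨q, hq⟩ = k ⟨q, hd⟩ then
      c * ∏ β ∈ Finset.univ.filter (fun β => S β ⊆ A ∪ D), F β (extA a k) else 0
  let V : Matrix K ({q : Q // q ∉ A} → Bool) ℂ := Matrix.of fun k cc =>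
    if ∀ (q : Q) (hq : q ∉ A) (hd : q ∈ D), cc ⟨q, hq⟩ = k ⟨q, hd⟩ then
      ∏ β ∈ Finset.univ.filter (fun β => ¬ S β ⊆ A ∪ D), F β (extC cc k) else 0
  have hM : dtCmat A ψ = U * V := by
    ext a cc
    rw [Matrix.mul_apply]
    set k₀ : K := fun q => dtMerge A a cc q.1 with hk₀
    rw [Finset.sum_eq_single k₀]
    · have hU : (∀ (q : Q) (hq : q ∈ A) (hd : q ∈ D), a ⟨q, hq⟩ = k₀ ⟨q, hd⟩) := by
        intro q hq hd; simp [hk₀, dtMerge, hq]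
      have hV : (∀ (q : Q) (hq : q ∉ A) (hd : q ∈ D), cc ⟨q, hq⟩ = k₀ ⟨q, hd⟩) := by
        intro q hq hd; simp [hk₀, dtMerge, hq]
      simp only [U, V, Matrix.of_apply, if_pos hU, if_pos hV]
      have h1 : ∀ β ∈ Finset.univ.filter (fun β => S β ⊆ A ∪ D),
          F β (extA a k₀) = F β (dtMerge A a cc) := by
        intro β hβ
        rw [Finset.mem_filter] at hβ
        refine hdep β _ _ fun q hq => ?_
        rcases Finset.mem_union.1 (hβ.2 hq) with h | h
        · simp [extA, dtMerge, h]
        · by_cases hqa : q ∈ A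
          · simp [extA, dtMerge, hqa]
          · simp [extA, dtMerge, hqa, h, hk₀]
      have h2 : ∀ β ∈ Finset.univ.filter (fun β => ¬ S β ⊆ A ∪ D),
          F β (extC cc k₀) = F β (dtMerge A a cc) := by
        intro β hβ
        rw [Finset.mem_filter] at hβ
        have hsub : S β ⊆ Aᶜ ∪ D := (hcov β).resolve_left hβ.2
        refine hdep β _ _ fun q hq => ?_
        by_cases hqd : q ∈ D
        · simp [extC, dtMerge, hqd, hk₀]
        · have hqa : q ∉ A := by
            rcases Finset.mem_union.1 (hsub hq) with h | h
            · exact Finset.mem_compl.1 h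
            · exact absurd h hqd
          simp [extC, dtMerge, hqd, hqa]
      rw [Finset.prod_congr rfl h1, Finset.prod_congr rfl h2, dtCmat,
        Matrix.of_apply, hψ, mul_assoc,
        Finset.prod_filter_mul_prod_filter_not]
    · intro k _ hk
      obtain ⟨q, hq⟩ := Function.ne_iff.1 (Ne.symm hk)
      by_cases hqa : q.1 ∈ A
      · have : ¬ (∀ (q' : Q) (hq' : q' ∈ A) (hd : q' ∈ D), a ⟨q', hq'⟩ = k ⟨q', hd⟩) := by
          intro hall
          apply hq
          rw [← hall q.1 hqa q.2]
          simp [hk₀, dtMerge, hqa]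
        simp only [U, Matrix.of_apply, if_neg this, zero_mul]
      · have : ¬ (∀ (q' : Q) (hq' : q' ∉ A) (hd : q' ∈ D), cc ⟨q', hq'⟩ = k ⟨q', hd⟩) := by
          intro hall
          apply hq
          rw [← hall q.1 hqa q.2]
          simp [hk₀, dtMerge, hqa]
        simp only [U, V, Matrix.of_apply, if_neg this, mul_zero]
    · intro h; exact absurd (Finset.mem_univ _) h
  rw [dtReducedOn_eq, hM]
  calc (U * V * (U * V)ᴴ).rank ≤ (U * V).rank := Matrix.rank_mul_le_left _ _
    _ ≤ U.rank := Matrix.rank_mul_le_left _ _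
    _ ≤ Fintype.card K := Matrix.rank_le_card_width U
    _ = 2 ^ D.card := by
        simp [K, Fintype.card_fun, Fintype.card_coe]

end Aux
section Aux2
open Matrix
variable {Q : Type*} [Fintype Q] [DecidableEq Q]

lemma dtTrace_reducedOn (A : Finset Q) (ψ : (Q → Bool) → ℂ) :
    (reducedOn A ψ).trace = ∑ x : Q → Bool, ψ x * (starRingEnd ℂ) (ψ x) := by
  classical
  have h1 : (reducedOn A ψ).trace
      = ∑ a : {q : Q // q ∈ A} → Bool, ∑ c : {q : Q // q ∉ A} → Bool,
          ψ (dtMerge A a c) * (starRingEnd ℂ) (ψ (dtMerge A a c)) := by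
    simp only [Matrix.trace, Matrix.diag, reducedOn, Matrix.of_apply, dtMerge]
    rfl
  rw [h1, ← Fintype.sum_prod_type']
  let e := (Equiv.piEquivPiSubtypeProd (fun q => q ∈ A) (fun _ => Bool))
  have h2 : ∀ p : ({q : Q // q ∈ A} → Bool) × ({q : Q // q ∉ A} → Bool),
      dtMerge A p.1 p.2 = e.symm p := by
    intro p; funext q
    simp [dtMerge, e, Equiv.piEquivPiSubtypeProd]
  calc (∑ p : ({q : Q // q ∈ A} → Bool) × ({q : Q // q ∉ A} → Bool),
        ψ (dtMerge A p.1 p.2) * (starRingEnd ℂ) (ψ (dtMerge A p.1 p.2)))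
      = ∑ p, ψ (e.symm p) * (starRingEnd ℂ) (ψ (e.symm p)) := by
        refine Finset.sum_congr rfl fun p _ => ?_; rw [h2]
    _ = ∑ x : Q → Bool, ψ x * (starRingEnd ℂ) (ψ x) :=
        Equiv.sum_comp e.symm fun x => ψ x * (starRingEnd ℂ) (ψ x)

lemma dtTrace_eq_sum_eigenvalues {n : Type*} [Fintype n] [DecidableEq n]
    (ρ : Matrix n n ℂ) (hH : ρ.IsHermitian) :
    ρ.trace = ∑ i, (hH.eigenvalues i : ℂ) := by
  exact hH.trace_eq_sum_eigenvalues

lemma dtEntropy_le_of_rank_le {n : Type*} [Fintype n] [DecidableEq n]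
    {ρ : Matrix n n ℂ} (hPSD : ρ.PosSemidef) (htr : ρ.trace = 1)
    (hH : ρ.IsHermitian) {d : ℕ} (hrank : ρ.rank ≤ 2 ^ d) :
    -∑ i, hH.eigenvalues i * Real.logb 2 (hH.eigenvalues i) ≤ (d : ℝ) := by
  classical
  set lam := hH.eigenvalues with hlam
  have hnn : ∀ i, 0 ≤ lam i := fun i => hPSD.eigenvalues_nonneg i
  have hsum : ∑ i, lam i = 1 := by
    have := dtTrace_eq_sum_eigenvalues ρ hH
    rw [htr] at this
    have : ((∑ i, lam i : ℝ) : ℂ) = ((1 : ℝ) : ℂ) := by push_cast; rw [← this]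
    exact_mod_cast this
  set T := Finset.univ.filter (fun i => lam i ≠ 0) with hT
  have hTcard : T.card = ρ.rank := by
    rw [hH.rank_eq_card_non_zero_eigs, Fintype.card_subtype]
  have hTsum : ∑ i ∈ T, lam i = 1 := by
    rw [hT, Finset.sum_filter_ne_zero, hsum]
  have hTpos : ∀ i ∈ T, 0 < lam i := by
    intro i hi
    rw [hT, Finset.mem_filter] at hi
    exact lt_of_le_of_ne (hnn i) (Ne.symm hi.2)
  -- rewrite entropy as a sum over T
  have hE : -∑ i, lam i * Real.logb 2 (lam i) = ∑ i ∈ T, lam i * Real.logb 2 (lam i)⁻¹ := by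
    rw [hT, Finset.sum_filter, ← Finset.sum_neg_distrib]
    refine Finset.sum_congr rfl fun i _ => ?_
    by_cases h : lam i = 0
    · simp [h]
    · rw [if_pos h, Real.logb_inv]; ring
  rw [hE]
  have hjensen : ∑ i ∈ T, lam i * Real.log (lam i)⁻¹ ≤ Real.log (∑ i ∈ T, lam i * (lam i)⁻¹) := by
    have := (strictConcaveOn_log_Ioi.concaveOn).le_map_sum
      (f := Real.log) (w := fun i => lam i) (p := fun i => (lam i)⁻¹) (t := T)
      (fun i hi => (hnn i)) hTsum
      (fun i hi => Set.mem_Ioi.2 (inv_pos.2 (hTpos i hi)))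
    simpa [smul_eq_mul] using this
  have hTsum2 : ∑ i ∈ T, lam i * (lam i)⁻¹ = (T.card : ℝ) := by
    rw [Finset.sum_congr rfl fun i hi => mul_inv_cancel₀ (hTpos i hi).ne']
    simp
  have hTone : 1 ≤ T.card := by
    by_contra h
    push_neg at h
    interval_cases hc : T.card
    · rw [Finset.card_eq_zero] at hc
      rw [hc] at hTsum; simp at hTsum
  have hlog : Real.log (∑ i ∈ T, lam i * (lam i)⁻¹) ≤ Real.log (2 ^ d) := by
    rw [hTsum2]
    apply Real.log_le_log (by exact_mod_cast hTone)
    exact_mod_cast hTcard.trans_le hrank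
  have hchain : ∑ i ∈ T, lam i * Real.log (lam i)⁻¹ ≤ (d : ℝ) * Real.log 2 := by
    calc ∑ i ∈ T, lam i * Real.log (lam i)⁻¹ ≤ Real.log (2 ^ d) := hjensen.trans hlog
      _ = (d : ℝ) * Real.log 2 := by rw [Real.log_pow]
  have hlogb : ∑ i ∈ T, lam i * Real.logb 2 (lam i)⁻¹
      = (∑ i ∈ T, lam i * Real.log (lam i)⁻¹) / Real.log 2 := by
    rw [Finset.sum_div]
    refine Finset.sum_congr rfl fun i _ => ?_
    rw [Real.logb, mul_div_assoc]
  rw [hlogb]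
  rw [div_le_iff₀ (Real.log_pos (by norm_num))]
  exact hchain

end Aux2

section Aux3
open Matrix

lemma dtNum {n' len' b2 d j : ℕ} (hb2 : b2 ≤ n') (hd : d < n') (hj : j < b2) :
    (d < len' → (d + j) % n' < len' + b2) ∧
      (len' ≤ d → (len' ≤ (d + j) % n' ∨ (d + j) % n' < b2)) := by
  rcases Nat.lt_or_ge (d + j) n' with h | h
  · rw [Nat.mod_eq_of_lt h]; omega
  · have h2 : (d + j) % n' = d + j - n' := by
      rw [Nat.mod_eq_sub_mod h, Nat.mod_eq_of_lt (by omega)]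
    rw [h2]; omega

lemma dtDd {n' cc : ℕ} {t j p : ℕ} (h : p ≡ t + j [MOD n']) :
    (p + cc) % n' = ((t + cc) % n' + j) % n' := by
  have h1 : (p + cc) % n' = (t + j + cc) % n' := h.add_right cc
  rw [h1, Nat.mod_add_mod]
  congr 1; ring

lemma dtScc {n' : ℕ} (hn : 0 < n') (s : ℕ) : (s + (n' - s % n')) % n' = 0 := by
  obtain ⟨k, r, hr, rfl⟩ : ∃ k r, r < n' ∧ s = n' * k + r :=
    ⟨s / n', s % n', Nat.mod_lt s hn, (Nat.div_add_mod s n').symm⟩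
  have hrm : (n' * k + r) % n' = r := by rw [Nat.mul_add_mod, Nat.mod_eq_of_lt hr]
  rw [hrm]
  have h2 : n' * k + r + (n' - r) = n' * k + n' := by
    rw [add_assoc, Nat.add_sub_cancel' hr.le]
  rw [h2, ← Nat.mul_succ, Nat.mul_mod_right]

lemma dtQpos_lt {m b : ℕ} (q : (Fin m × Bool) × Fin b) : qpos m b q < 2 * m * b := by
  obtain ⟨⟨i, e⟩, r⟩ := q
  have h1 : (i : ℕ) < m := i.isLt
  have h2 : (r : ℕ) < b := r.isLt
  simp only [qpos]
  cases e <;> simp <;> nlinarith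

lemma dtQpos_inj {m b : ℕ} : Function.Injective (qpos m b) := by
  rintro ⟨⟨i, e⟩, r⟩ ⟨⟨i', e'⟩, r'⟩ h
  simp only [qpos] at h
  have hr : (r : ℕ) < b := r.isLt
  have hr' : (r' : ℕ) < b := r'.isLt
  have hb : 0 < b := Nat.pos_of_ne_zero (by rintro rfl; omega)
  set X := 2 * (i : ℕ) + (if e then 1 else 0) with hX
  set X' := 2 * (i' : ℕ) + (if e' then 1 else 0) with hX'
  have hA : X = X' := by
    have e1 : (X * b + (r : ℕ)) / b = X := by
      rw [add_comm, mul_comm, Nat.add_mul_div_left _ _ hb, Nat.div_eq_of_lt hr, zero_add]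
    have e2 : (X' * b + (r' : ℕ)) / b = X' := by
      rw [add_comm, mul_comm, Nat.add_mul_div_left _ _ hb, Nat.div_eq_of_lt hr', zero_add]
    rw [← e1, ← e2, h]
  have hrr : (r : ℕ) = r' := by
    rw [hA] at h
    exact Nat.add_left_cancel h
  have hie : (i : ℕ) = i' ∧ e = e' := by
    rw [hX, hX'] at hA
    cases e <;> cases e' <;> simp at hA
    · exact ⟨by omega, rfl⟩
    · exact (by omega : False).elim
    · exact (by omega : False).elim
    · exact ⟨by omega, rfl⟩
  ext
  · exact hie.1
  · simp [hie.2]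
  · exact hrr
end Aux3

section Aux4
open Matrix

def dtS (m b : ℕ) : (Fin m × Bool) → Finset ((Fin m × Bool) × Fin b)
  | (i, false) => ({(i, false), (i, true)} : Finset (Fin m × Bool)) ×ˢ Finset.univ
  | (i, true) => ({(cpred i, true), (i, false)} : Finset (Fin m × Bool)) ×ˢ Finset.univ

def dtF (m b : ℕ) (f g : Fin m → (Bits b × Bits b) → Bool) :
    (Fin m × Bool) → (((Fin m × Bool) × Fin b) → Bool) → ℂ
  | (i, false) => fun x => sgn (f i (fun r => x ((i, false), r), fun r => x ((i, true), r)))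
  | (i, true) => fun x => sgn (g i (fun r => x ((cpred i, true), r), fun r => x ((i, false), r)))

def dtT (m b : ℕ) : (Fin m × Bool) → ℕ
  | (i, false) => 2 * (i : ℕ) * b
  | (i, true) => (2 * (cpred i : ℕ) + 1) * b

lemma dtF_dep (m b : ℕ) (f g : Fin m → (Bits b × Bits b) → Bool) :
    ∀ β x y, (∀ q ∈ dtS m b β, x q = y q) → dtF m b f g β x = dtF m b f g β y := by
  rintro ⟨i, σ⟩ x y h
  cases σ
  · have h1 : (fun r => x ((i, false), r)) = fun r => y ((i, false), r) := by
      funext r; exact h _ (by simp [dtS, Finset.mem_product])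
    have h2 : (fun r => x ((i, true), r)) = fun r => y ((i, true), r) := by
      funext r; exact h _ (by simp [dtS, Finset.mem_product])
    simp only [dtF, h1, h2]
  · have h1 : (fun r => x ((cpred i, true), r)) = fun r => y ((cpred i, true), r) := by
      funext r; exact h _ (by simp [dtS, Finset.mem_product])
    have h2 : (fun r => x ((i, false), r)) = fun r => y ((i, false), r) := by
      funext r; exact h _ (by simp [dtS, Finset.mem_product])
    simp only [dtF, h1, h2]

lemma dtProd (m b : ℕ) (f g : Fin m → (Bits b × Bits b) → Bool)
    (x : ((Fin m × Bool) × Fin b) → Bool) :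
    lbps m b f g (fun p r => x (p, r)) =
      (1 / (Real.sqrt (2 ^ (2 * m * b)) : ℂ)) * ∏ β : Fin m × Bool, dtF m b f g β x := by
  rw [Fintype.prod_prod_type]
  simp only [Fintype.prod_bool]
  rw [Finset.prod_mul_distrib]
  simp only [dtF, lbps]
  ring

lemma dtBrick (m b : ℕ) : ∀ β q, q ∈ dtS m b β →
    ∃ j < 2 * b, qpos m b q ≡ dtT m b β + j [MOD 2 * m * b] := by
  rintro ⟨i, σ⟩ ⟨⟨i', e'⟩, r⟩ hq
  have hr : (r : ℕ) < b := r.isLt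
  cases σ <;>
    simp only [dtS, Finset.mem_product, Finset.mem_insert, Finset.mem_singleton,
      Finset.mem_univ, and_true, Prod.mk.injEq] at hq
  · rcases hq with ⟨rfl, rfl⟩ | ⟨rfl, rfl⟩
    · refine ⟨(r : ℕ), by omega, ?_⟩
      have : qpos m b ((i', false), r) = dtT m b (i', false) + (r : ℕ) := by
        simp [qpos, dtT]; try ring
      rw [this]
    · refine ⟨b + (r : ℕ), by omega, ?_⟩
      have : qpos m b ((i', true), r) = dtT m b (i', false) + (b + (r : ℕ)) := by
        simp [qpos, dtT]; try ring
      rw [this]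
  · rcases hq with ⟨rfl, rfl⟩ | ⟨rfl, rfl⟩
    · refine ⟨(r : ℕ), by omega, ?_⟩
      have : qpos m b ((cpred i, true), r) = dtT m b (i, true) + (r : ℕ) := by
        simp [qpos, dtT]; try ring
      rw [this]
    · refine ⟨b + (r : ℕ), by omega, ?_⟩
      have hm : 0 < m := i'.pos
      have hc : ((cpred i' : ℕ) + 1) % m = (i' : ℕ) % m := by
        simp only [cpred]
        rw [Nat.mod_add_mod]
        have h3 : (i' : ℕ) + (m - 1) + 1 = (i' : ℕ) + m := by omega
        rw [h3, Nat.add_mod_right]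
      have hc' : ((cpred i' : ℕ) + 1) ≡ (i' : ℕ) [MOD m] := hc
      have hmod : (2 * ((cpred i' : ℕ) + 1)) * b ≡ (2 * (i' : ℕ)) * b [MOD 2 * m * b] :=
        Nat.ModEq.mul_right' b (Nat.ModEq.mul_left' 2 hc')
      have e1 : dtT m b (i', true) + (b + (r : ℕ)) = 2 * ((cpred i' : ℕ) + 1) * b + (r : ℕ) := by
        simp [dtT]; ring
      have e2 : qpos m b ((i', false), r) = 2 * (i' : ℕ) * b + (r : ℕ) := by
        simp [qpos]
      rw [e1, e2]
      exact (hmod.add_right (r : ℕ)).symm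

lemma dtSgn_conj (v : Bool) : (starRingEnd ℂ) (sgn v) = sgn v := by
  cases v <;> simp [sgn]

lemma dtSgn_sq (v : Bool) : sgn v * sgn v = 1 := by
  cases v <;> simp [sgn]

lemma dtNorm (m b : ℕ) (f g : Fin m → (Bits b × Bits b) → Bool)
    (x : ((Fin m × Bool) × Fin b) → Bool) :
    lbps m b f g (fun p r => x (p, r)) *
        (starRingEnd ℂ) (lbps m b f g (fun p r => x (p, r))) = ((2 : ℂ) ^ (2 * m * b))⁻¹ := by
  rw [lbps]
  set P1 := ∏ i : Fin m, sgn (f i ((fun p r => x (p, r)) (i, false), (fun p r => x (p, r)) (i, true))) with hP1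
  set P2 := ∏ i : Fin m, sgn (g i ((fun p r => x (p, r)) (cpred i, true), (fun p r => x (p, r)) (i, false))) with hP2
  have c1 : (starRingEnd ℂ) P1 = P1 := by
    rw [hP1, map_prod]; exact Finset.prod_congr rfl fun i _ => dtSgn_conj _
  have c2 : (starRingEnd ℂ) P2 = P2 := by
    rw [hP2, map_prod]; exact Finset.prod_congr rfl fun i _ => dtSgn_conj _
  have s1 : P1 * P1 = 1 := by
    rw [hP1, ← Finset.prod_mul_distrib]
    exact Finset.prod_eq_one fun i _ => dtSgn_sq _
  have s2 : P2 * P2 = 1 := by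
    rw [hP2, ← Finset.prod_mul_distrib]
    exact Finset.prod_eq_one fun i _ => dtSgn_sq _
  have hd : ((Real.sqrt (2 ^ (2 * m * b)) : ℝ) : ℂ) * ((Real.sqrt (2 ^ (2 * m * b)) : ℝ) : ℂ)
      = (2 : ℂ) ^ (2 * m * b) := by
    rw [← Complex.ofReal_mul, Real.mul_self_sqrt (by positivity)]
    push_cast; ring
  rw [map_div₀, _root_.map_mul, c1, c2, Complex.conj_ofReal, div_mul_div_comm]
  rw [show P1 * P2 * (P1 * P2) = (P1 * P1) * (P2 * P2) by ring, s1, s2, one_mul, hd]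
  rw [one_div]

end Aux4

/-- across any bipartition of the ring of `n = 2mb` qubits into two contiguous
arcs, a large-brick phase state has Schmidt rank at most `2^{4b}` and entanglement entropy
at most `4b`. -/
theorem large_brick_low_entanglement (m b : ℕ) (hm : 1 ≤ m) (hb : 1 ≤ b)
    (f g : Fin m → (Bits b × Bits b) → Bool)
    (A : Finset ((Fin m × Bool) × Fin b))
    (hA : IsArc m b A) (hAc : IsArc m b Aᶜ) :
    (reducedOn A fun F : ((Fin m × Bool) × Fin b) → Bool =>
        lbps m b f g fun p r => F (p, r)).rank ≤ 2 ^ (4 * b) ∧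
      ∀ hH : (reducedOn A fun F : ((Fin m × Bool) × Fin b) → Bool =>
          lbps m b f g fun p r => F (p, r)).IsHermitian,
        -∑ i, hH.eigenvalues i * Real.logb 2 (hH.eigenvalues i) ≤ ((4 * b : ℕ) : ℝ) := by
  classical
  obtain ⟨s, len, hmem⟩ := hA
  set ψ : (((Fin m × Bool) × Fin b) → Bool) → ℂ :=
    fun F => lbps m b f g fun p r => F (p, r) with hψdef
  set n' := 2 * m * b with hn'
  have hn : 0 < n' := by
    have h0 : 0 < 2 * m := by omega
    exact Nat.mul_pos h0 hb
  have h2b : 2 * b ≤ n' := by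
    calc 2 * b = 2 * 1 * b := by ring
      _ ≤ 2 * m * b := Nat.mul_le_mul_right b (Nat.mul_le_mul_left 2 hm)
  set cc := n' - s % n' with hcc
  set len' := min len n' with hlen'
  -- characterization of membership in A
  have hAiff : ∀ q, q ∈ A ↔ (qpos m b q + cc) % n' < len' := by
    intro q
    rw [hmem q]
    constructor
    · rintro ⟨j, hj, hq⟩
      have hq' : qpos m b q ≡ s + j [MOD n'] := hq
      have h1 : (qpos m b q + cc) % n' = ((s + cc) % n' + j) % n' := dtDd hq'
      rw [dtScc hn s, Nat.zero_add] at h1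
      have h2 : j % n' ≤ j := Nat.mod_le _ _
      have h3 : j % n' < n' := Nat.mod_lt _ hn
      rw [h1, hlen']
      exact lt_min (Nat.lt_of_le_of_lt h2 hj) h3
    · intro h
      refine ⟨(qpos m b q + cc) % n',
        lt_of_lt_of_le h (by rw [hlen']; exact min_le_left _ _), ?_⟩
      have h1 : (s + (qpos m b q + cc) % n') % n' = (s + (qpos m b q + cc)) % n' :=
        Nat.ModEq.add_left s (Nat.mod_modEq _ n')
      have h2 : (s + (qpos m b q + cc)) % n' = (qpos m b q + (s + cc)) % n' := by
        congr 1; ring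
      have h3 : (qpos m b q + (s + cc)) % n' = qpos m b q % n' := by
        rw [Nat.add_mod, dtScc hn s, Nat.add_zero, Nat.mod_mod_of_dvd _ dvd_rfl]
      exact (h1.trans (h2.trans h3)).symm
  have hlen'le : len' ≤ n' := by rw [hlen']; exact min_le_right _ _
  have hinj : ∀ q q' : (Fin m × Bool) × Fin b,
      (qpos m b q + cc) % n' = (qpos m b q' + cc) % n' → q = q' := by
    intro q q' h
    apply dtQpos_inj (m := m) (b := b)
    have h1 : qpos m b q < n' := dtQpos_lt q
    have h2 : qpos m b q' < n' := dtQpos_lt q'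
    have h3 : qpos m b q ≡ qpos m b q' [MOD n'] := Nat.ModEq.add_right_cancel' cc h
    rwa [Nat.ModEq, Nat.mod_eq_of_lt h1, Nat.mod_eq_of_lt h2] at h3
  set D : Finset ((Fin m × Bool) × Fin b) := Finset.univ.filter
    (fun q => (qpos m b q + cc) % n' < 2 * b ∨
      (len' ≤ (qpos m b q + cc) % n' ∧ (qpos m b q + cc) % n' < len' + 2 * b)) with hD
  have hDcard : D.card ≤ 4 * b := by
    rw [hD, Finset.filter_or]
    refine (Finset.card_union_le _ _).trans ?_
    have c1 : (Finset.univ.filter (fun q : (Fin m × Bool) × Fin b =>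
        (qpos m b q + cc) % n' < 2 * b)).card ≤ 2 * b := by
      refine le_trans (Finset.card_le_card_of_injOn
        (t := Finset.range (2 * b))
        (fun q => (qpos m b q + cc) % n') (fun q hq => ?_)
        (fun q _ q' _ h => hinj q q' h)) (by rw [Finset.card_range])
      rw [Finset.coe_filter] at hq
      exact Finset.mem_range.2 hq.2
    have c2 : (Finset.univ.filter (fun q : (Fin m × Bool) × Fin b =>
        len' ≤ (qpos m b q + cc) % n' ∧ (qpos m b q + cc) % n' < len' + 2 * b)).card
        ≤ 2 * b := by
      refine le_trans (Finset.card_le_card_of_injOn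
        (t := Finset.Ico len' (len' + 2 * b))
        (fun q => (qpos m b q + cc) % n') (fun q hq => ?_)
        (fun q _ q' _ h => hinj q q' h)) (by rw [Nat.card_Ico]; omega)
      rw [Finset.coe_filter] at hq
      exact Finset.mem_Ico.2 hq.2
    omega
  have hcov : ∀ β, dtS m b β ⊆ A ∪ D ∨ dtS m b β ⊆ Aᶜ ∪ D := by
    intro β
    have hdt : (dtT m b β + cc) % n' < n' := Nat.mod_lt _ hn
    by_cases hc : (dtT m b β + cc) % n' < len'
    · left
      intro q hq
      obtain ⟨j, hj, hcong⟩ := dtBrick m b β q hq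
      rw [← hn'] at hcong
      have he : (qpos m b q + cc) % n' = ((dtT m b β + cc) % n' + j) % n' := dtDd hcong
      have hnum := (dtNum h2b hdt hj).1 hc
      rw [← he] at hnum
      rw [Finset.mem_union]
      by_cases h2 : (qpos m b q + cc) % n' < len'
      · exact Or.inl ((hAiff q).2 h2)
      · refine Or.inr ?_
        rw [hD, Finset.mem_filter]
        exact ⟨Finset.mem_univ _, Or.inr ⟨by omega, hnum⟩⟩
    · right
      intro q hq
      obtain ⟨j, hj, hcong⟩ := dtBrick m b β q hq
      rw [← hn'] at hcong
      have he : (qpos m b q + cc) % n' = ((dtT m b β + cc) % n' + j) % n' := dtDd hcong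
      have hnum := (dtNum h2b hdt hj).2 (le_of_not_gt hc)
      rw [← he] at hnum
      rw [Finset.mem_union]
      rcases hnum with h2 | h2
      · refine Or.inl (Finset.mem_compl.2 fun hqa => ?_)
        have := (hAiff q).1 hqa
        omega
      · refine Or.inr ?_
        rw [hD, Finset.mem_filter]
        exact ⟨Finset.mem_univ _, Or.inl h2⟩
  have hψprod : ∀ x, ψ x =
      (1 / (Real.sqrt (2 ^ (2 * m * b)) : ℂ)) * ∏ β : Fin m × Bool, dtF m b f g β x :=
    fun x => dtProd m b f g x
  have hrank : (reducedOn A ψ).rank ≤ 2 ^ (4 * b) := by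
    refine le_trans (dtRank_reducedOn_le A D (dtS m b) (dtF m b f g) _ ψ
      (dtF_dep m b f g) hcov hψprod) ?_
    exact Nat.pow_le_pow_right (by norm_num) hDcard
  have htr : (reducedOn A ψ).trace = 1 := by
    rw [dtTrace_reducedOn]
    rw [Finset.sum_congr rfl fun x _ => dtNorm m b f g x, Finset.sum_const,
      Finset.card_univ, Fintype.card_fun]
    simp only [Fintype.card_prod, Fintype.card_bool, Fintype.card_fin]
    rw [nsmul_eq_mul]
    push_cast
    rw [show m * 2 * b = 2 * m * b by ring]
    exact mul_inv_cancel₀ (pow_ne_zero _ two_ne_zero)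
  refine ⟨hrank, fun hH => ?_⟩
  exact_mod_cast dtEntropy_le_of_rank_le (dtReducedOn_posSemidef A ψ) htr hH hrank


end

end DT
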